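/- Let X be a real Hilbert space and Ψ : X → ℝ a sequentially weakly continuous functional such that Ψ(w) ≤ b·(1 + ‖w‖^l) for all w ∈ X, for some constants b > 0 and 0 < l < 2. Set Φ(w) := (1/2)‖w‖². Then for every λ > 0 and γ > 0 the truncated functional J_λ^{(γ)} is sequentially weakly lower semicontinuous and coercive, and it attains a global minimum on X, i.e. there exists w₂ ∈ X with J_λ^{(γ)}(w₂) ≤ J_λ^{(γ)}(w) for all w ∈ X. -/

import Mathlib

open Filter Topology

/-- The truncated functional `J_λ^{(γ)}` associated with `Φ(w) = (1/2)‖w‖²` and `Ψ`: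
equal to `γ² − λΨ(w)` when `(1/2)‖w‖² ≤ γ²` and to `(1/2)‖w‖² − λΨ(w)` otherwise. -/
noncomputable def truncatedEnergy {X : Type*} [NormedAddCommGroup X]
    (Ψ : X → ℝ) (lam γ : ℝ) : X → ℝ := fun w =>
  if (1 / 2 : ℝ) * ‖w‖ ^ 2 ≤ γ ^ 2 then γ ^ 2 - lam * Ψ w
  else (1 / 2 : ℝ) * ‖w‖ ^ 2 - lam * Ψ w

/-!
A bounded sequence in a Hilbert space has a weakly convergent subsequence: its closed span is
separable, so sequential Banach–Alaoglu applies to its Riesz image in the dual.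

Write `J w = max (γ², ½‖w‖²) - λΨ(w)`. The first term is weakly lower semicontinuous because
`‖u n‖² ≥ 2⟪x, u n⟫ - ‖x‖² → ‖x‖²`, the second is weakly continuous, and by Banach–Steinhaus a
weakly convergent sequence is bounded, so `J (u n)` is bounded above and its `liminf` is a
genuine one. The growth bound gives `J w ≥ ½‖w‖² - λb(1 + ‖w‖^l)`, which tends to `+∞` since
`l < 2` and is bounded below since `l > 0`. The direct method then produces a minimiser: a
minimising sequence is bounded, has a weakly convergent subsequence, and lower semicontinuity
puts its limit at the infimum.
-/

open Set TopologicalSpace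

section WeakConvergence

variable (𝕜 : Type*) {E : Type*} [RCLike 𝕜] [NormedAddCommGroup E] [NormedSpace 𝕜 E]

def WeakSeqTendsto (u : ℕ → E) (x : E) : Prop :=
  ∀ f : StrongDual 𝕜 E, Tendsto (fun n => f (u n)) atTop (𝓝 (f x))

/-- Along a sequence on which `J` is unbounded above, `liminf` in `ℝ` is a junk value, so this is
the usual notion only for sequences with `J ∘ u` bounded above. -/
def WeakSeqLowerSemicontinuous (J : E → ℝ) : Prop :=
  ∀ u x, WeakSeqTendsto 𝕜 u x → J x ≤ liminf (fun n => J (u n)) atTop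

variable {𝕜}

theorem WeakSeqTendsto.exists_norm_le {u : ℕ → E} {x : E} (hu : WeakSeqTendsto 𝕜 u x) :
    ∃ C, ∀ n, ‖u n‖ ≤ C := by
  have hbdd : ∀ f : StrongDual 𝕜 E, ∃ C, ∀ n, ‖NormedSpace.inclusionInDoubleDual 𝕜 E (u n) f‖ ≤ C :=
    fun f => by
      obtain ⟨C, hC⟩ := (hu f).norm.bddAbove_range
      exact ⟨C, fun n => hC ⟨n, rfl⟩⟩
  obtain ⟨C, hC⟩ := banach_steinhaus hbdd
  exact ⟨C, fun n => (NormedSpace.inclusionInDoubleDualLi 𝕜).norm_map (u n) ▸ hC n⟩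

theorem WeakSeqTendsto.map {F : Type*} [NormedAddCommGroup F] [NormedSpace 𝕜 F] {u : ℕ → E}
    {x : E} (hu : WeakSeqTendsto 𝕜 u x) (T : E →L[𝕜] F) : WeakSeqTendsto 𝕜 (T ∘ u) (T x) :=
  fun f => hu (f ∘L T)

end WeakConvergence

section Hilbert

variable {X : Type*} [NormedAddCommGroup X] [InnerProductSpace ℝ X]

theorem WeakSeqTendsto.eventually_lt_norm_sq {u : ℕ → X} {x : X} (hu : WeakSeqTendsto ℝ u x)
    {r : ℝ} (hr : r < ‖x‖ ^ 2) : ∀ᶠ n in atTop, r < ‖u n‖ ^ 2 := by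
  have hinner : Tendsto (fun n => 2 * inner ℝ x (u n) - ‖x‖ ^ 2) atTop (𝓝 (‖x‖ ^ 2)) := by
    have := ((hu (innerSL ℝ x)).const_mul 2).sub_const (‖x‖ ^ 2)
    simpa [real_inner_self_eq_norm_sq, two_mul] using this
  filter_upwards [hinner.eventually (eventually_gt_nhds hr)] with n hn
  -- `‖u n‖² ≥ 2⟪x, u n⟫ - ‖x‖²` is `‖u n - x‖² ≥ 0`.
  nlinarith [norm_sub_sq_real (u n) x, sq_nonneg ‖u n - x‖, real_inner_comm x (u n)]

theorem exists_weakSeqTendsto_subseq_of_separableSpace [CompleteSpace X] [SeparableSpace X]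
    {u : ℕ → X} {C : ℝ} (hC : ∀ n, ‖u n‖ ≤ C) :
    ∃ φ : ℕ → ℕ, StrictMono φ ∧ ∃ x, WeakSeqTendsto ℝ (u ∘ φ) x := by
  let v : ℕ → WeakDual ℝ X := fun n => InnerProductSpace.toDual ℝ X (u n)
  have hv : ∀ n, v n ∈ WeakDual.toStrongDual ⁻¹' Metric.closedBall 0 C := fun n => by
    rw [mem_preimage, Metric.mem_closedBall, dist_zero_right]
    exact ((InnerProductSpace.toDual ℝ X).norm_map _).trans_le (hC n)
  obtain ⟨L, -, φ, hφ, hL⟩ := WeakDual.isSeqCompact_closedBall ℝ X 0 C hv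
  refine ⟨φ, hφ, (InnerProductSpace.toDual ℝ X).symm (WeakDual.toStrongDual L), fun f => ?_⟩
  set z := (InnerProductSpace.toDual ℝ X).symm f
  have hf : ∀ w, f w = inner ℝ w z := fun w => by
    rw [real_inner_comm, InnerProductSpace.toDual_symm_apply]
  simp only [Function.comp_apply, hf, InnerProductSpace.toDual_symm_apply]
  exact (WeakDual.eval_continuous z).continuousAt.tendsto.comp hL

theorem exists_weakSeqTendsto_subseq [CompleteSpace X] {u : ℕ → X} {C : ℝ}
    (hC : ∀ n, ‖u n‖ ≤ C) : ∃ φ : ℕ → ℕ, StrictMono φ ∧ ∃ x, WeakSeqTendsto ℝ (u ∘ φ) x := by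
  set Y := (Submodule.span ℝ (range u)).topologicalClosure
  have hY : ∀ n, u n ∈ Y := fun n =>
    Submodule.le_topologicalClosure _ (Submodule.subset_span ⟨n, rfl⟩)
  have : SeparableSpace Y := (countable_range u).isSeparable.span.closure.separableSpace
  have : CompleteSpace Y := (Submodule.isClosed_topologicalClosure _).completeSpace_coe
  obtain ⟨φ, hφ, y, hy⟩ :=
    exists_weakSeqTendsto_subseq_of_separableSpace (u := fun n => (⟨u n, hY n⟩ : Y)) hC
  exact ⟨φ, hφ, y, hy.map Y.subtypeL⟩


theorem WeakSeqLowerSemicontinuous.exists_forall_le [CompleteSpace X] {J : X → ℝ}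
    (hlsc : WeakSeqLowerSemicontinuous ℝ J) (hcoer : Tendsto J (comap norm atTop) atTop)
    (hbdd : BddBelow (range J)) :
    ∃ x, ∀ w, J x ≤ J w := by
  obtain ⟨a, ha_anti, ha, ha_mem⟩ := exists_seq_tendsto_sInf (range_nonempty J) hbdd
  choose u hu using ha_mem
  obtain ⟨R, hR⟩ : ∃ R, ∀ w, R ≤ ‖w‖ → a 0 < J w :=
    eventually_atTop.mp (eventually_comap.mp (hcoer.eventually_gt_atTop (a 0)))
      |>.imp fun R hR w hw => hR ‖w‖ hw w rfl
  have hu_bdd : ∀ n, ‖u n‖ ≤ R := fun n => by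
    by_contra! h
    have := hR (u n) h.le
    linarith [hu n, ha_anti (Nat.zero_le n)]
  obtain ⟨φ, hφ, x, hx⟩ := exists_weakSeqTendsto_subseq hu_bdd
  have hlim : liminf (fun k => J (u (φ k))) atTop = sInf (range J) := by
    simp only [hu]
    exact (ha.comp hφ.tendsto_atTop).liminf_eq
  exact ⟨x, fun w => (hlsc _ x hx).trans_eq hlim |>.trans (csInf_le hbdd ⟨w, rfl⟩)⟩

end Hilbert

theorem tendsto_half_sq_sub_mul_one_add_rpow_atTop (c : ℝ) {l : ℝ} (hl : l < 2) :
    Tendsto (fun t : ℝ => 1 / 2 * t ^ 2 - c * (1 + t ^ l)) atTop atTop := by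
  have hdecay : Tendsto (fun t : ℝ => 1 / 2 - c * t ^ (l - 2)) atTop (𝓝 (1 / 2)) := by
    have h0 : Tendsto (fun t : ℝ => t ^ (l - 2)) atTop (𝓝 0) := by
      simpa using tendsto_rpow_neg_atTop (sub_pos.2 hl)
    simpa using (h0.const_mul c).const_sub (1 / 2 : ℝ)
  have hfactored := ((tendsto_pow_atTop two_ne_zero).atTop_mul_pos (by norm_num) hdecay).atTop_add
    (tendsto_const_nhds (x := -c))
  refine hfactored.congr' ?_
  filter_upwards [eventually_gt_atTop 0] with t ht
  rw [Real.rpow_sub ht, Real.rpow_two]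
  field_simp
  ring

theorem exists_le_half_sq_sub_mul_one_add_rpow (c : ℝ) {l : ℝ} (hl0 : 0 ≤ l) (hl : l < 2) :
    ∃ m, ∀ t, 0 ≤ t → m ≤ 1 / 2 * t ^ 2 - c * (1 + t ^ l) := by
  obtain ⟨R, hR⟩ := eventually_atTop.mp
    ((tendsto_half_sq_sub_mul_one_add_rpow_atTop c hl).eventually_ge_atTop 0)
  refine ⟨-|c| * (1 + |R| ^ l), fun t ht => ?_⟩
  rcases le_total R t with hRt | htR
  · have : 0 ≤ |c| * (1 + |R| ^ l) := by positivity
    linarith [hR t hRt]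
  · have htl : t ^ l ≤ |R| ^ l := Real.rpow_le_rpow ht (htR.trans (le_abs_self R)) hl0
    have hc : c * (1 + t ^ l) ≤ |c| * (1 + t ^ l) :=
      mul_le_mul_of_nonneg_right (le_abs_self c) (by positivity)
    nlinarith [sq_nonneg t, abs_nonneg c]

section TruncatedEnergy

variable {X : Type*} [NormedAddCommGroup X]

theorem truncatedEnergy_eq_max (Ψ : X → ℝ) (lam γ : ℝ) (w : X) :
    truncatedEnergy Ψ lam γ w = max (γ ^ 2) (1 / 2 * ‖w‖ ^ 2) - lam * Ψ w := by
  unfold truncatedEnergy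
  split_ifs with h
  · rw [max_eq_left h]
  · rw [max_eq_right (le_of_not_ge h)]

theorem half_sq_sub_mul_one_add_rpow_le_truncatedEnergy {Ψ : X → ℝ} {b l lam : ℝ}
    (hgrowth : ∀ w, Ψ w ≤ b * (1 + ‖w‖ ^ l)) (hlam : 0 ≤ lam) (γ : ℝ) (w : X) :
    1 / 2 * ‖w‖ ^ 2 - lam * b * (1 + ‖w‖ ^ l) ≤ truncatedEnergy Ψ lam γ w := by
  rw [truncatedEnergy_eq_max, mul_assoc]
  linarith [le_max_right (γ ^ 2) (1 / 2 * ‖w‖ ^ 2), mul_le_mul_of_nonneg_left (hgrowth w) hlam]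

theorem truncatedEnergy_le_liminf [InnerProductSpace ℝ X] {Ψ : X → ℝ} (lam γ : ℝ) {u : ℕ → X}
    {x : X} (hu : WeakSeqTendsto ℝ u x) (hΨ : Tendsto (fun n => Ψ (u n)) atTop (𝓝 (Ψ x))) :
    truncatedEnergy Ψ lam γ x ≤ liminf (fun n => truncatedEnergy Ψ lam γ (u n)) atTop := by
  have hlamΨ := hΨ.const_mul lam
  have hbdd : IsBoundedUnder (· ≤ ·) atTop (fun n => truncatedEnergy Ψ lam γ (u n)) := by
    obtain ⟨C, hC⟩ := hu.exists_norm_le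
    obtain ⟨c, hc⟩ := hlamΨ.bddBelow_range
    refine isBoundedUnder_of ⟨max (γ ^ 2) (1 / 2 * C ^ 2) - c, fun n => ?_⟩
    have hnorm : 1 / 2 * ‖u n‖ ^ 2 ≤ 1 / 2 * C ^ 2 := by
      gcongr
      exact hC n
    rw [truncatedEnergy_eq_max]
    linarith [max_le_max_left (γ ^ 2) hnorm, hc ⟨n, rfl⟩]
  refine le_of_forall_sub_le fun ε hε => le_liminf_of_le hbdd.isCoboundedUnder_ge ?_
  filter_upwards [hu.eventually_lt_norm_sq (sub_lt_self (‖x‖ ^ 2) hε),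
    hlamΨ.eventually (eventually_lt_nhds (lt_add_of_pos_right (lam * Ψ x) (half_pos hε)))]
    with n hnorm hΨn
  rw [truncatedEnergy_eq_max, truncatedEnergy_eq_max]
  have : max (γ ^ 2) (1 / 2 * ‖x‖ ^ 2) ≤ max (γ ^ 2) (1 / 2 * ‖u n‖ ^ 2) + ε / 2 :=
    max_le (by linarith [le_max_left (γ ^ 2) (1 / 2 * ‖u n‖ ^ 2)])
      (by linarith [le_max_right (γ ^ 2) (1 / 2 * ‖u n‖ ^ 2)])
  linarith

end TruncatedEnergy

theorem truncatedEnergy_wlsc_coercive_attains_min_general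
    {X : Type*} [NormedAddCommGroup X] [InnerProductSpace ℝ X] [CompleteSpace X]
    (Ψ : X → ℝ)
    (hswc : ∀ (u : ℕ → X) (x : X),
      (∀ f : X →L[ℝ] ℝ, Tendsto (fun n => f (u n)) atTop (𝓝 (f x))) →
      Tendsto (fun n => Ψ (u n)) atTop (𝓝 (Ψ x)))
    (b l : ℝ) (hl0 : 0 < l) (hl2 : l < 2)
    (hgrowth : ∀ w : X, Ψ w ≤ b * (1 + ‖w‖ ^ l))
    (lam γ : ℝ) (hlam : 0 < lam) :
    (∀ (u : ℕ → X) (x : X),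
      (∀ f : X →L[ℝ] ℝ, Tendsto (fun n => f (u n)) atTop (𝓝 (f x))) →
      truncatedEnergy Ψ lam γ x ≤ Filter.liminf (fun n => truncatedEnergy Ψ lam γ (u n)) atTop) ∧
    Tendsto (truncatedEnergy Ψ lam γ) (Filter.comap norm atTop) atTop ∧
    ∃ w₂ : X, ∀ w : X, truncatedEnergy Ψ lam γ w₂ ≤ truncatedEnergy Ψ lam γ w := by
  have hlower := half_sq_sub_mul_one_add_rpow_le_truncatedEnergy hgrowth hlam.le γ
  have hlsc : WeakSeqLowerSemicontinuous ℝ (truncatedEnergy Ψ lam γ) :=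
    fun u x hu => truncatedEnergy_le_liminf lam γ hu (hswc u x hu)
  have hcoer : Tendsto (truncatedEnergy Ψ lam γ) (comap norm atTop) atTop :=
    tendsto_atTop_mono hlower
      ((tendsto_half_sq_sub_mul_one_add_rpow_atTop (lam * b) hl2).comp tendsto_comap)
  obtain ⟨m, hm⟩ := exists_le_half_sq_sub_mul_one_add_rpow (lam * b) hl0.le hl2
  have hbdd : BddBelow (range (truncatedEnergy Ψ lam γ)) :=
    ⟨m, forall_mem_range.mpr fun w => (hm ‖w‖ (norm_nonneg w)).trans (hlower w)⟩
  exact ⟨hlsc, hcoer, hlsc.exists_forall_le hcoer hbdd⟩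

/-- In a real Hilbert space, if `Ψ` is sequentially weakly continuous with
`Ψ(w) ≤ b(1 + ‖w‖^l)` (`b > 0`, `0 < l < 2`), then for all `λ, γ > 0` the truncated
functional `J_λ^{(γ)}` is sequentially weakly lower semicontinuous, coercive, and attains
a global minimum on `X`. -/
theorem truncatedEnergy_wlsc_coercive_attains_min
    {X : Type*} [NormedAddCommGroup X] [InnerProductSpace ℝ X] [CompleteSpace X]
    (Ψ : X → ℝ)
    (hswc : ∀ (u : ℕ → X) (x : X),
      (∀ f : X →L[ℝ] ℝ, Tendsto (fun n => f (u n)) atTop (𝓝 (f x))) →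
      Tendsto (fun n => Ψ (u n)) atTop (𝓝 (Ψ x)))
    (b l : ℝ) (hb : 0 < b) (hl0 : 0 < l) (hl2 : l < 2)
    (hgrowth : ∀ w : X, Ψ w ≤ b * (1 + ‖w‖ ^ l))
    (lam γ : ℝ) (hlam : 0 < lam) (hγ : 0 < γ) :
    (∀ (u : ℕ → X) (x : X),
      (∀ f : X →L[ℝ] ℝ, Tendsto (fun n => f (u n)) atTop (𝓝 (f x))) →
      truncatedEnergy Ψ lam γ x ≤ Filter.liminf (fun n => truncatedEnergy Ψ lam γ (u n)) atTop) ∧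
    Tendsto (truncatedEnergy Ψ lam γ) (Filter.comap norm atTop) atTop ∧
    ∃ w₂ : X, ∀ w : X, truncatedEnergy Ψ lam γ w₂ ≤ truncatedEnergy Ψ lam γ w :=
  truncatedEnergy_wlsc_coercive_attains_min_general Ψ hswc b l hl0 hl2 hgrowth lam γ hlam
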